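/- For every L ∈ gl(n,ℝ) and every matrix A ∈ R₁ (i.e., A𝟏 = 0 and AᵀΩ + ΩA diagonal), the pairings agree: Tr(Lᵀ Ω A) = Tr(P(L)ᵀ Ω A), where P(L)_{ij} = ½(L_{ij} − L_{ji} − L_{ii} + L_{jj}) and Ω is a positive diagonal matrix. -/
import Mathlib


open Matrix

/-- For every L ∈ gl(n,ℝ) and every A ∈ R₁ (A·𝟏 = 0 and AᵀΩ + ΩA diagonal,
Ω a positive diagonal matrix), the pairings agree:
Tr(Lᵀ Ω A) = Tr(P(L)ᵀ Ω A), where P(L)_{ij} = ½(L_{ij} − L_{ji} − L_{ii} + L_{jj}). -/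
theorem stmt5 (n : ℕ) (Ω : Matrix (Fin n) (Fin n) ℝ)
    (hΩdiag : Ω.IsDiag) (hΩpos : ∀ i, 0 < Ω i i)
    (L A : Matrix (Fin n) (Fin n) ℝ)
    (hA1 : A.mulVec 1 = 0) (hAdiag : (Aᵀ * Ω + Ω * A).IsDiag) :
    (Lᵀ * Ω * A).trace =
      ((Matrix.of fun i j => (1 / 2 : ℝ) * (L i j - L j i - L i i + L j j))ᵀ
        * Ω * A).trace := by
  have hΩ : ∀ i j, i ≠ j → Ω i j = 0 := fun i j h => hΩdiag h
  have hrow : ∀ i, ∑ j, A i j = 0 := by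
    intro i
    have := congrFun hA1 i
    simpa [Matrix.mulVec, dotProduct] using this
  have hoff : ∀ i j, i ≠ j → Ω i i * A i j + Ω j j * A j i = 0 := by
    intro i j hij
    have h := hAdiag hij
    simp only [Matrix.add_apply, Matrix.mul_apply, Matrix.transpose_apply] at h
    have h1 : (∑ k, A k i * Ω k j) = A j i * Ω j j :=
      Finset.sum_eq_single j (fun k _ hk => by rw [hΩ k j hk, mul_zero]) (by simp)
    have h2 : (∑ k, Ω i k * A k j) = Ω i i * A i j :=
      Finset.sum_eq_single i (fun k _ hk => by rw [hΩ i k (Ne.symm hk), zero_mul]) (by simp)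
    rw [h1, h2] at h
    linarith
  have hcol : ∀ j, ∑ i, Ω i i * A i j = 2 * (Ω j j * A j j) := by
    intro j
    have h0 : ∑ i, Ω j j * A j i = 0 := by
      rw [← Finset.mul_sum, hrow, mul_zero]
    have h1 : ∑ i, (Ω i i * A i j + Ω j j * A j i) = 2 * (Ω j j * A j j) := by
      rw [Finset.sum_eq_single j (fun i _ hi => hoff i j hi) (by simp)]
      ring
    calc ∑ i, Ω i i * A i j
        = ∑ i, (Ω i i * A i j + Ω j j * A j i) - ∑ i, Ω j j * A j i := by
          rw [← Finset.sum_sub_distrib]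
          exact Finset.sum_congr rfl fun i _ => by ring
      _ = 2 * (Ω j j * A j j) := by rw [h0, h1]; ring
  have htr : ∀ M : Matrix (Fin n) (Fin n) ℝ,
      (Mᵀ * Ω * A).trace = ∑ i, ∑ j, M i j * (Ω i i * A i j) := by
    intro M
    have h1 : ∀ j k : Fin n, (∑ m, M m j * Ω m k) = M k j * Ω k k := fun j k =>
      Finset.sum_eq_single k (fun m _ hm => by rw [hΩ m k hm, mul_zero]) (by simp)
    simp only [Matrix.trace, Matrix.diag, Matrix.mul_apply, Matrix.transpose_apply, h1]
    rw [Finset.sum_comm]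
    exact Finset.sum_congr rfl fun i _ => Finset.sum_congr rfl fun j _ => by ring
  have hT : (∑ i, ∑ j, (L i j + L j i) * (Ω i i * A i j))
      = 2 * ∑ i, L i i * (Ω i i * A i i) := by
    have hswap : (∑ i, ∑ j, (L i j + L j i) * (Ω i i * A i j))
        = ∑ i, ∑ j, (L j i + L i j) * (Ω j j * A j i) := by rw [Finset.sum_comm]
    have h2 : (∑ i, ∑ j, (L i j + L j i) * (Ω i i * A i j + Ω j j * A j i))
        = 4 * ∑ i, L i i * (Ω i i * A i i) := by
      rw [Finset.mul_sum]
      refine Finset.sum_congr rfl fun i _ => ?_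
      rw [Finset.sum_eq_single i
        (fun j _ hj => by rw [hoff i j (Ne.symm hj), mul_zero]) (by simp)]
      ring
    have h3 : (∑ i, ∑ j, (L i j + L j i) * (Ω i i * A i j))
        + (∑ i, ∑ j, (L i j + L j i) * (Ω i i * A i j))
        = ∑ i, ∑ j, (L i j + L j i) * (Ω i i * A i j + Ω j j * A j i) := by
      nth_rewrite 2 [hswap]
      rw [← Finset.sum_add_distrib]
      refine Finset.sum_congr rfl fun i _ => ?_
      rw [← Finset.sum_add_distrib]
      exact Finset.sum_congr rfl fun j _ => by ring
    rw [h2] at h3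
    linarith
  have hU : (∑ i, ∑ j, (L i i - L j j) * (Ω i i * A i j))
      = -2 * ∑ i, L i i * (Ω i i * A i i) := by
    have e1 : (∑ i, ∑ j, L i i * (Ω i i * A i j)) = 0 := by
      refine Finset.sum_eq_zero fun i _ => ?_
      have : (∑ j, L i i * (Ω i i * A i j)) = L i i * Ω i i * ∑ j, A i j := by
        rw [Finset.mul_sum]
        exact Finset.sum_congr rfl fun j _ => by ring
      rw [this, hrow, mul_zero]
    have e2 : (∑ i, ∑ j, L j j * (Ω i i * A i j)) = 2 * ∑ i, L i i * (Ω i i * A i i) := by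
      rw [Finset.sum_comm, Finset.mul_sum]
      refine Finset.sum_congr rfl fun j _ => ?_
      rw [← Finset.mul_sum, hcol]
      ring
    calc (∑ i, ∑ j, (L i i - L j j) * (Ω i i * A i j))
        = (∑ i, ∑ j, L i i * (Ω i i * A i j)) - (∑ i, ∑ j, L j j * (Ω i i * A i j)) := by
          rw [← Finset.sum_sub_distrib]
          refine Finset.sum_congr rfl fun i _ => ?_
          rw [← Finset.sum_sub_distrib]
          exact Finset.sum_congr rfl fun j _ => by ring
      _ = -2 * ∑ i, L i i * (Ω i i * A i i) := by rw [e1, e2]; ring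
  rw [htr, htr]
  simp only [Matrix.of_apply]
  have hdiff : (∑ i, ∑ j, L i j * (Ω i i * A i j))
      - (∑ i, ∑ j, (1 / 2 : ℝ) * (L i j - L j i - L i i + L j j) * (Ω i i * A i j))
      = (1 / 2 : ℝ) * (∑ i, ∑ j, (L i j + L j i) * (Ω i i * A i j))
        + (1 / 2 : ℝ) * (∑ i, ∑ j, (L i i - L j j) * (Ω i i * A i j)) := by
    rw [Finset.mul_sum, Finset.mul_sum, ← Finset.sum_add_distrib, ← Finset.sum_sub_distrib]
    refine Finset.sum_congr rfl fun i _ => ?_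
    rw [Finset.mul_sum, Finset.mul_sum, ← Finset.sum_add_distrib, ← Finset.sum_sub_distrib]
    exact Finset.sum_congr rfl fun j _ => by ring
  rw [hT, hU] at hdiff
  linarith
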